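/- arXiv:0804.2356 — 3 statements merged into one kernel-verified Lean document; each statement's English description precedes it below -/
import Mathlib

section
/- Define on continuous real functions φ : [0,T] → ℝ that are everywhere positive the maps E_{u,v}(φ)(t) = u φ(t) + v φ(t) ∫_0^t φ(s)^{−2} ds, for u > 0, v ∈ ℝ. Then whenever the compositions are defined (i.e., all intermediate functions are positive), E_{u,v} ∘ E_{u',v'} = E_{uu', uv' + v/u'}. In particular these maps define a partial right action of the group of unimodular lower triangular 2×2 matrices (u 0; v u^{−1}). -/
/-!
With `I(t) = ∫_0^t φ^{-2}` we have `E_{u',v'}(φ) = φ (u' + v' I)`, and the quotient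
`I / (u' (u' + v' I))` has derivative `φ^{-2} / (u' + v' I)^2 = E_{u',v'}(φ)^{-2}`. Hence
`∫_0^t E_{u',v'}(φ)^{-2} = I(t) / (u' (u' + v' I(t)))`, and substituting this into the definition
of `E_{u,v}` gives the composition law by algebra.
-/

open Set intervalIntegral

/-- The Sturm–Liouville variation-of-constants map
`E_{u,v}(φ)(t) = u φ(t) + v φ(t) ∫_0^t φ(s)^{−2} ds`. -/
noncomputable def Emap (u v : ℝ) (φ : ℝ → ℝ) : ℝ → ℝ :=
  fun t => u * φ t + v * φ t * ∫ s in (0:ℝ)..t, ((φ s) ^ 2)⁻¹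

section Primitive

variable {g : ℝ → ℝ} {a b : ℝ}

theorem hasDerivAt_primitive_of_continuousOn (hg : ContinuousOn g (Icc a b)) {x : ℝ}
    (hx : x ∈ Ioo a b) : HasDerivAt (fun y => ∫ s in a..y, g s) (g x) x := by
  have hIoo : ContinuousOn g (Ioo a b) := hg.mono Ioo_subset_Icc_self
  refine integral_hasDerivAt_right ((hg.mono ?_).intervalIntegrable)
    (hIoo.stronglyMeasurableAtFilter isOpen_Ioo x hx) (hIoo.continuousAt (isOpen_Ioo.mem_nhds hx))
  rw [uIcc_of_le hx.1.le]
  exact Icc_subset_Icc_right hx.2.le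

theorem continuousOn_primitive_of_continuousOn (hab : a ≤ b) (hg : ContinuousOn g (Icc a b)) :
    ContinuousOn (fun y => ∫ s in a..y, g s) (Icc a b) := by
  have h := continuousOn_primitive_interval (f := g) (a := a) (b := b) (μ := MeasureTheory.volume)
    (by rw [uIcc_of_le hab]; exact hg.integrableOn_Icc)
  rwa [uIcc_of_le hab] at h

theorem HasDerivAt.div_const_mul_const_add_mul {G : ℝ → ℝ} {g x c d : ℝ} (hG : HasDerivAt G g x)
    (hc : c ≠ 0) (hx : c + d * G x ≠ 0) :
    HasDerivAt (fun y => G y / (c * (c + d * G y))) (g / (c + d * G x) ^ 2) x :=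
  (hG.div (((hG.const_mul d).const_add c).const_mul c) (mul_ne_zero hc hx)).congr_deriv <| by
    field_simp
    ring

theorem integral_div_sq_primitive (hab : a ≤ b) (hg : ContinuousOn g (Icc a b)) {c d : ℝ}
    (hc : c ≠ 0) (hne : ∀ x ∈ Icc a b, c + d * ∫ s in a..x, g s ≠ 0) :
    ∫ x in a..b, g x / (c + d * ∫ s in a..x, g s) ^ 2 =
      (∫ s in a..b, g s) / (c * (c + d * ∫ s in a..b, g s)) := by
  have hGc := continuousOn_primitive_of_continuousOn hab hg
  have hden : ContinuousOn (fun x => c + d * ∫ s in a..x, g s) (Icc a b) := by fun_prop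
  rw [integral_eq_sub_of_hasDerivAt_of_le hab
      (hGc.div (continuousOn_const.mul hden) fun x hx => mul_ne_zero hc (hne x hx))
      fun x hx => (hasDerivAt_primitive_of_continuousOn hg hx).div_const_mul_const_add_mul hc
        (hne x (Ioo_subset_Icc_self hx))]
  · simp
  · refine ContinuousOn.intervalIntegrable ?_
    rw [uIcc_of_le hab]
    exact hg.div (hden.pow 2) fun x hx => pow_ne_zero 2 (hne x hx)

end Primitive

theorem Emap_eq_mul (u v : ℝ) (φ : ℝ → ℝ) (t : ℝ) :
    Emap u v φ t = φ t * (u + v * ∫ s in (0:ℝ)..t, ((φ s) ^ 2)⁻¹) := by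
  simp only [Emap]
  ring

theorem integral_inv_sq_Emap {u v t : ℝ} {φ : ℝ → ℝ} (ht : 0 ≤ t) (hφ : ContinuousOn φ (Icc 0 t))
    (hu : u ≠ 0) (hne : ∀ s ∈ Icc 0 t, Emap u v φ s ≠ 0) :
    ∫ s in (0:ℝ)..t, ((Emap u v φ s) ^ 2)⁻¹ = (∫ s in (0:ℝ)..t, ((φ s) ^ 2)⁻¹) /
      (u * (u + v * ∫ s in (0:ℝ)..t, ((φ s) ^ 2)⁻¹)) := by
  simp only [Emap_eq_mul, mul_ne_zero_iff] at hne ⊢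
  have hg : ContinuousOn (fun s => ((φ s) ^ 2)⁻¹) (Icc 0 t) :=
    (hφ.pow 2).inv₀ fun s hs => pow_ne_zero 2 (hne s hs).1
  rw [← integral_div_sq_primitive ht hg hu fun s hs => (hne s hs).2]
  refine integral_congr fun s _ => ?_
  simp only [mul_pow, mul_inv, div_eq_mul_inv]

theorem Emap_Emap_apply {u v u' v' t : ℝ} {φ : ℝ → ℝ} (ht : 0 ≤ t) (hφ : ContinuousOn φ (Icc 0 t))
    (hu' : u' ≠ 0) (hne : ∀ s ∈ Icc 0 t, Emap u' v' φ s ≠ 0) :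
    Emap u v (Emap u' v' φ) t = Emap (u * u') (u * v' + v / u') φ t := by
  have hden : u' + v' * ∫ s in (0:ℝ)..t, ((φ s) ^ 2)⁻¹ ≠ 0 :=
    right_ne_zero_of_mul (by simpa only [Emap_eq_mul] using hne t (right_mem_Icc.2 ht))
  rw [Emap_eq_mul u v, integral_inv_sq_Emap ht hφ hu' hne, Emap_eq_mul, Emap_eq_mul]
  generalize ∫ s in (0:ℝ)..t, ((φ s) ^ 2)⁻¹ = I at hden ⊢
  field_simp
  ring

theorem Emap_comp_general (T : ℝ) (φ : ℝ → ℝ)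
    (hφc : ContinuousOn φ (Set.Icc 0 T))
    (u u' : ℝ) (hu' : 0 < u') (v v' : ℝ)
    (hpos : ∀ t ∈ Set.Icc 0 T, 0 < Emap u' v' φ t) :
    ∀ t ∈ Set.Icc 0 T,
      Emap u v (Emap u' v' φ) t = Emap (u * u') (u * v' + v / u') φ t := fun _ ht =>
  Emap_Emap_apply ht.1 (hφc.mono (Icc_subset_Icc_right ht.2)) hu'.ne'
    fun s hs => (hpos s ⟨hs.1, hs.2.trans ht.2⟩).ne'

/-- Whenever the composition is defined (all intermediate functions positive),
`E_{u,v} ∘ E_{u',v'} = E_{uu', uv' + v/u'}` on `[0,T]`; these maps thus define a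
partial right action of the group of unimodular lower triangular matrices. -/
theorem Emap_comp (T : ℝ) (hT : 0 < T) (φ : ℝ → ℝ)
    (hφc : ContinuousOn φ (Set.Icc 0 T)) (hφpos : ∀ t ∈ Set.Icc 0 T, 0 < φ t)
    (u u' : ℝ) (hu : 0 < u) (hu' : 0 < u') (v v' : ℝ)
    (hpos : ∀ t ∈ Set.Icc 0 T, 0 < Emap u' v' φ t) :
    ∀ t ∈ Set.Icc 0 T,
      Emap u v (Emap u' v' φ) t = Emap (u * u') (u * v' + v / u') φ t :=
  Emap_comp_general T φ hφc u u' hu' v v' hpos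
end

section
/- Let a : [0,T] → ℝ be continuous. Then lim_{ε → 0+} ε log( e^{a(t)/ε} ∫_0^t e^{−2a(s)/ε} ds ) = a(t) − 2 inf_{0 ≤ s ≤ t} a(s) for every t ∈ (0,T]. In other words, the transformation φ ↦ φ(t)∫_0^t φ(s)^{−2} ds is a geometric lifting of the one-dimensional Pitman transform. -/
/-!
Laplace's principle: for `f` continuous on `[u, v]` with maximum `M`, the integral
`∫_u^v exp (f / ε)` lies between `(v - u) exp (M / ε)` and `(v' - u') exp ((M - δ) / ε)`, where
`[u', v']` is a nondegenerate interval near a maximiser on which `f > M - δ`; after `ε log`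
both bounds tend to `M` up to `δ`. Applied to `f = -2a`, whose supremum is `-2 inf a`, and with
the factor `exp (a t / ε)` contributing `a t`, this gives the limit.
-/

open Set Filter MeasureTheory Topology

theorem Real.mul_log_exp_div_mul {ε x : ℝ} (c : ℝ) (hε : ε ≠ 0) (hx : x ≠ 0) :
    ε * Real.log (Real.exp (c / ε) * x) = c + ε * Real.log x := by
  rw [Real.log_mul (Real.exp_ne_zero _) hx, Real.log_exp, mul_add, mul_div_cancel₀ _ hε]

section Laplace

variable {f : ℝ → ℝ} {u v ε : ℝ}

theorem intervalIntegrable_exp_div (huv : u ≤ v) (hf : ContinuousOn f (Icc u v)) (ε : ℝ) :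
    IntervalIntegrable (fun s => Real.exp (f s / ε)) volume u v :=
  (Real.continuous_exp.comp_continuousOn (hf.div_const ε)).intervalIntegrable_of_Icc huv

theorem intervalIntegral_exp_div_pos (huv : u < v) (hf : ContinuousOn f (Icc u v)) (ε : ℝ) :
    0 < ∫ s in u..v, Real.exp (f s / ε) :=
  intervalIntegral.intervalIntegral_pos_of_pos (intervalIntegrable_exp_div huv.le hf ε)
    (fun _ => Real.exp_pos _) huv

theorem mul_log_intervalIntegral_exp_div_le {M : ℝ} (huv : u < v) (hf : ContinuousOn f (Icc u v))
    (hε : 0 < ε) (hM : ∀ s ∈ Icc u v, f s ≤ M) :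
    ε * Real.log (∫ s in u..v, Real.exp (f s / ε)) ≤ M + ε * Real.log (v - u) := by
  have hle : ∫ s in u..v, Real.exp (f s / ε) ≤ Real.exp (M / ε) * (v - u) := by
    simpa [mul_comm] using intervalIntegral.integral_mono_on huv.le
      (intervalIntegrable_exp_div huv.le hf ε) intervalIntegrable_const
      fun s hs => Real.exp_le_exp.2 (div_le_div_of_nonneg_right (hM s hs) hε.le)
  calc ε * Real.log (∫ s in u..v, Real.exp (f s / ε))
      ≤ ε * Real.log (Real.exp (M / ε) * (v - u)) :=
        mul_le_mul_of_nonneg_left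
          (Real.log_le_log (intervalIntegral_exp_div_pos huv hf ε) hle) hε.le
    _ = M + ε * Real.log (v - u) := Real.mul_log_exp_div_mul M hε.ne' (sub_pos.2 huv).ne'

theorem le_mul_log_intervalIntegral_exp_div {c u' v' : ℝ} (huv : u' < v')
    (hsub : Icc u' v' ⊆ Icc u v) (hf : ContinuousOn f (Icc u v)) (hε : 0 < ε)
    (hc : ∀ s ∈ Icc u' v', c ≤ f s) :
    c + ε * Real.log (v' - u') ≤ ε * Real.log (∫ s in u..v, Real.exp (f s / ε)) := by
  obtain ⟨hu, hv⟩ : u ≤ u' ∧ v' ≤ v := (Icc_subset_Icc_iff huv.le).1 hsub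
  have hf' : ContinuousOn f (Icc u' v') := hf.mono hsub
  have hle : Real.exp (c / ε) * (v' - u') ≤ ∫ s in u..v, Real.exp (f s / ε) :=
    calc Real.exp (c / ε) * (v' - u') ≤ ∫ s in u'..v', Real.exp (f s / ε) := by
          simpa [mul_comm] using intervalIntegral.integral_mono_on huv.le intervalIntegrable_const
            (intervalIntegrable_exp_div huv.le hf' ε)
            fun s hs => Real.exp_le_exp.2 (div_le_div_of_nonneg_right (hc s hs) hε.le)
      _ ≤ ∫ s in u..v, Real.exp (f s / ε) :=
          intervalIntegral.integral_mono_interval hu huv.le hv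
            (Eventually.of_forall fun _ => (Real.exp_pos _).le)
            (intervalIntegrable_exp_div (hu.trans (huv.le.trans hv)) hf ε)
  calc c + ε * Real.log (v' - u') = ε * Real.log (Real.exp (c / ε) * (v' - u')) :=
        (Real.mul_log_exp_div_mul c hε.ne' (sub_pos.2 huv).ne').symm
    _ ≤ ε * Real.log (∫ s in u..v, Real.exp (f s / ε)) :=
        mul_le_mul_of_nonneg_left
          (Real.log_le_log (mul_pos (Real.exp_pos _) (sub_pos.2 huv)) hle) hε.le

end Laplace

theorem tendsto_add_mul_nhdsGT_zero (c K : ℝ) :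
    Tendsto (fun ε => c + ε * K) (𝓝[>] 0) (𝓝 c) :=
  ((continuous_const.add (continuous_id.mul continuous_const)).tendsto' 0 c
    (by simp)).mono_left nhdsWithin_le_nhds

theorem exists_Icc_subset_of_mem_nhdsWithin_Icc {s : Set ℝ} {u v x : ℝ} (huv : u < v)
    (hx : x ∈ Icc u v) (hs : s ∈ 𝓝[Icc u v] x) :
    ∃ u' v', u' < v' ∧ Icc u' v' ⊆ Icc u v ∩ s := by
  obtain ⟨r, hr, hball⟩ := Metric.mem_nhdsWithin_iff.1 hs
  refine ⟨max u (x - r / 2), min v (x + r / 2), ?_, fun y ⟨hy₁, hy₂⟩ => ?_⟩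
  · obtain ⟨hux, hxv⟩ := hx
    apply max_lt <;> apply lt_min <;> linarith
  rw [max_le_iff] at hy₁
  rw [le_min_iff] at hy₂
  have hy : y ∈ Icc u v := ⟨hy₁.1, hy₂.1⟩
  refine ⟨hy, hball ⟨?_, hy⟩⟩
  rw [Metric.mem_ball, Real.dist_eq, abs_sub_lt_iff]
  constructor <;> linarith

theorem tendsto_mul_log_intervalIntegral_exp_div {f : ℝ → ℝ} {u v : ℝ} (huv : u < v)
    (hf : ContinuousOn f (Icc u v)) :
    Tendsto (fun ε => ε * Real.log (∫ s in u..v, Real.exp (f s / ε))) (𝓝[>] 0)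
      (𝓝 (sSup (f '' Icc u v))) := by
  obtain ⟨x₀, hx₀, hmax⟩ := isCompact_Icc.exists_isMaxOn (nonempty_Icc.2 huv.le) hf
  rw [IsGreatest.csSup_eq ⟨mem_image_of_mem f hx₀, forall_mem_image.2 hmax⟩, tendsto_order]
  refine ⟨fun c hc => ?_, fun c hc => ?_⟩
  · obtain ⟨u', v', huv', hsub⟩ := exists_Icc_subset_of_mem_nhdsWithin_Icc huv hx₀
      ((hf x₀ hx₀).eventually (lt_mem_nhds (by linarith : (c + f x₀) / 2 < f x₀)))
    filter_upwards [(tendsto_add_mul_nhdsGT_zero _ (Real.log (v' - u'))).eventually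
      (lt_mem_nhds (by linarith : c < (c + f x₀) / 2)), self_mem_nhdsWithin] with ε hlt hε
    exact hlt.trans_le (le_mul_log_intervalIntegral_exp_div huv' (hsub.trans inter_subset_left)
      hf hε fun s hs => (hsub hs).2.le)
  · filter_upwards [(tendsto_add_mul_nhdsGT_zero (f x₀) (Real.log (v - u))).eventually
      (gt_mem_nhds hc), self_mem_nhdsWithin] with ε hlt hε
    exact (mul_log_intervalIntegral_exp_div_le huv hf hε hmax).trans_lt hlt

/-- Laplace-method limit: for continuous `a : [0,T] → ℝ` and `t ∈ (0,T]`,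
`lim_{ε→0+} ε log( e^{a(t)/ε} ∫_0^t e^{−2a(s)/ε} ds ) = a(t) − 2 inf_{0≤s≤t} a(s)`,
i.e. `φ ↦ φ(t)∫_0^t φ(s)^{−2} ds` is a geometric lifting of the 1-dim Pitman transform. -/
theorem geometric_lifting_pitman (T : ℝ) (a : ℝ → ℝ)
    (ha : ContinuousOn a (Set.Icc 0 T)) (t : ℝ) (ht : t ∈ Set.Ioc 0 T) :
    Filter.Tendsto
      (fun ε : ℝ => ε * Real.log (Real.exp (a t / ε) *
        ∫ s in (0:ℝ)..t, Real.exp (-2 * a s / ε)))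
      (nhdsWithin 0 (Set.Ioi 0))
      (nhds (a t - 2 * sInf (a '' Set.Icc 0 t))) := by
  obtain ⟨ht0, htT⟩ := ht
  have hf : ContinuousOn (fun s => -2 * a s) (Icc 0 t) :=
    (ha.mono (Icc_subset_Icc_right htT)).const_smul (-2 : ℝ)
  have hsup : sSup ((fun s => -2 * a s) '' Icc 0 t) = -2 * sInf (a '' Icc 0 t) := by
    rw [← image_image (-2 * ·) a, ← smul_eq_mul, ← Real.sSup_smul_of_nonpos (by norm_num)]
    rfl
  have hlim := (tendsto_mul_log_intervalIntegral_exp_div ht0 hf).const_add (a t)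
  rw [hsup] at hlim
  rw [sub_eq_add_neg, ← neg_mul]
  refine hlim.congr' ?_
  filter_upwards [self_mem_nhdsWithin] with ε hε
  exact (Real.mul_log_exp_div_mul _ (ne_of_gt hε) (intervalIntegral_exp_div_pos ht0 hf ε).ne').symm
end

section
/- Define the scaling (λη)(t) = λ·η(t) for λ > 0. Then for any path η : [0,T] → V with η(0)=0, any r ∈ ℝ and u > 0, the Littelmann operator satisfies E_α^{ru}(uη) = u · E_α^r(η) (with the convention u·0 = 0 for the ghost element). -/
open Set

/-- The Littelmann path operator `E_α^x η` (explicit formulas of the path model). -/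
noncomputable def littel {V : Type*} [NormedAddCommGroup V] [NormedSpace ℝ V]
    (α : V) (αv : V →ₗ[ℝ] ℝ) (T : ℝ) (η : ℝ → V) (x : ℝ) : ℝ → V :=
  if x ≤ 0 then
    fun t => η t - min (-x) (sInf ((fun s => αv (η s)) '' Set.Icc t T) -
      sInf ((fun s => αv (η s)) '' Set.Icc 0 T)) • α
  else
    fun t => η t - min 0 (-x - sInf ((fun s => αv (η s)) '' Set.Icc 0 T) +
      sInf ((fun s => αv (η s)) '' Set.Icc 0 t)) • α

/-- `E_α^x η ≠ 0` exactly when `x` lies in the allowed interval. -/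
def littelDefined {V : Type*} [NormedAddCommGroup V] [NormedSpace ℝ V]
    (αv : V →ₗ[ℝ] ℝ) (T : ℝ) (η : ℝ → V) (x : ℝ) : Prop :=
  -(αv (η T)) + sInf ((fun s => αv (η s)) '' Set.Icc 0 T) ≤ x ∧
    x ≤ -sInf ((fun s => αv (η s)) '' Set.Icc 0 T)

theorem Real.sInf_image_const_mul {ι : Type*} {u : ℝ} (hu : 0 ≤ u) (f : ι → ℝ) (S : Set ι) :
    sInf ((fun s => u * f s) '' S) = u * sInf (f '' S) := by
  rw [← smul_eq_mul, ← Real.sInf_smul_of_nonneg hu, ← Set.image_smul, Set.image_image]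
  rfl

section Scaling

variable {V : Type*} [NormedAddCommGroup V] [NormedSpace ℝ V]
  (α : V) (αv : V →ₗ[ℝ] ℝ) (T : ℝ) (η : ℝ → V) {u : ℝ}

theorem littelDefined_smul (hu : 0 < u) (r : ℝ) :
    littelDefined αv T (fun t => u • η t) (r * u) ↔ littelDefined αv T η r := by
  unfold littelDefined
  simp only [map_smul, smul_eq_mul, Real.sInf_image_const_mul hu.le]
  set m := sInf ((fun s => αv (η s)) '' Icc 0 T)
  have lower : -(u * αv (η T)) + u * m ≤ r * u ↔ -αv (η T) + m ≤ r := by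
    rw [← mul_neg, ← mul_add, mul_comm r, mul_le_mul_iff_right₀ hu]
  have upper : r * u ≤ -(u * m) ↔ r ≤ -m := by
    rw [← mul_neg, mul_comm r, mul_le_mul_iff_right₀ hu]
  rw [lower, upper]

theorem littel_smul (hu : 0 < u) (r t : ℝ) :
    littel α αv T (fun t => u • η t) (r * u) t = u • littel α αv T η r t := by
  have sign : r * u ≤ 0 ↔ r ≤ 0 := by
    simpa only [not_lt] using (mul_pos_iff_of_pos_right hu).not
  unfold littel
  simp only [sign, map_smul, smul_eq_mul, Real.sInf_image_const_mul hu.le]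
  split_ifs <;> rw [smul_sub, smul_smul, mul_min_of_nonneg _ _ hu.le] <;> ring_nf

end Scaling

theorem littel_scaling_general {V : Type*} [NormedAddCommGroup V] [NormedSpace ℝ V]
    (α : V) (αv : V →ₗ[ℝ] ℝ) (T : ℝ)
    (η : ℝ → V)
    (r u : ℝ) (hu : 0 < u) :
    (littelDefined αv T (fun t => u • η t) (r * u) ↔ littelDefined αv T η r) ∧
    (littelDefined αv T η r → ∀ t ∈ Set.Icc 0 T,
      littel α αv T (fun t => u • η t) (r * u) t = u • littel α αv T η r t) :=
  ⟨littelDefined_smul αv T η hu r, fun _ t _ => littel_smul α αv T η hu r t⟩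

/-- Scaling property: for `u > 0`, `E_α^{ru}(uη) = u · E_α^r(η)` (with the ghost
element handled by definedness: `E_α^{ru}(uη)` is defined iff `E_α^r η` is). -/
theorem littel_scaling {V : Type*} [NormedAddCommGroup V] [NormedSpace ℝ V]
    (α : V) (αv : V →ₗ[ℝ] ℝ) (hα : αv α = 2) (T : ℝ) (hT : 0 < T)
    (η : ℝ → V) (hη : ContinuousOn η (Set.Icc 0 T)) (h0 : η 0 = 0)
    (r u : ℝ) (hu : 0 < u) :
    (littelDefined αv T (fun t => u • η t) (r * u) ↔ littelDefined αv T η r) ∧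
    (littelDefined αv T η r → ∀ t ∈ Set.Icc 0 T,
      littel α αv T (fun t => u • η t) (r * u) t = u • littel α αv T η r t) :=
  littel_scaling_general α αv T η r u hu
end
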